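/- If G is a connected non-complete finite simple graph and m ≥ 2, then the toll number of the Cartesian product G □ K_m equals 2. -/

import Mathlib

open SimpleGraph

/-- A walk `W` between `u` and `v` is a *tolled walk* if either `u = v` and `W` is trivial,
or `u` and `v` are adjacent and `W` is the single-edge walk, or `u ≠ v` are non-adjacent,
`W` has at least one interior vertex, `u` is adjacent exactly to the interior vertex
at position 1 and `v` exactly to the interior vertex at position `W.length - 1`. -/
def IsTolledWalk {V : Type*} (G : SimpleGraph V) {u v : V} (W : G.Walk u v) : Prop :=
  (u = v ∧ W.length = 0) ∨
  (G.Adj u v ∧ W.support = [u, v]) ∨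
  (¬ G.Adj u v ∧ u ≠ v ∧ 2 ≤ W.length ∧
    (∀ i, 0 < i → i < W.length → (G.Adj u (W.support.getD i u) ↔ i = 1)) ∧
    (∀ i, 0 < i → i < W.length → (G.Adj v (W.support.getD i u) ↔ i = W.length - 1)))

/-- The toll interval between `u` and `v`: vertices lying on some tolled walk. -/
def tollInterval {V : Type*} (G : SimpleGraph V) (u v : V) : Set V :=
  {x | ∃ W : G.Walk u v, IsTolledWalk G W ∧ x ∈ W.support}

/-- A toll set: the toll intervals between its pairs cover the vertex set. -/
def IsTollSet {V : Type*} (G : SimpleGraph V) (S : Set V) : Prop :=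
  ∀ x : V, ∃ u ∈ S, ∃ v ∈ S, x ∈ tollInterval G u v

/-- The toll number: minimum size of a toll set. -/
noncomputable def tollNumber {V : Type*} (G : SimpleGraph V) : ℕ :=
  sInf {n | ∃ S : Set V, S.Finite ∧ S.ncard = n ∧ IsTollSet G S}

/-- `v` is a cut vertex if deleting it disconnects the graph. -/
def IsCutVertex {V : Type*} (G : SimpleGraph V) (v : V) : Prop :=
  ¬ (G.induce {w | w ≠ v}).Preconnected

/-- The extreme vertices of `G` with respect to toll convexity. -/
def extremeVertices {V : Type*} (G : SimpleGraph V) : Set V :=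
  {s | ∀ x y : V, x ≠ s → y ≠ s → s ∉ tollInterval G x y}

/-- The lexicographic product of simple graphs. -/
def lexProd {V W : Type*} (G : SimpleGraph V) (H : SimpleGraph W) : SimpleGraph (V × W) where
  Adj a b := G.Adj a.1 b.1 ∨ (a.1 = b.1 ∧ H.Adj a.2 b.2)
  symm := by
    constructor
    rintro a b (h | ⟨h1, h2⟩)
    · exact Or.inl h.symm
    · exact Or.inr ⟨h1.symm, h2.symm⟩
  loopless := by
    constructor
    rintro a (h | ⟨_, h⟩)
    · exact G.irrefl h
    · exact H.irrefl h

/-!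
Take a diametral pair `x, y` of `G`; as `G` is not complete, `x` and `y` are not adjacent.
Diametrality gives, for every other vertex `g`, a path from `x` to `g` avoiding `y` and a path
from `g` to `y` avoiding `x`: on a shortest `x`–`g` path through `y`, `g` would be farther
from `x` than `y`. Joined inside a copy `G × {c}`, `c ≠ z₀`, and attached to `(x, z₀)` and
`(y, z₀)` by the vertical edges at `x` and `y`, these give tolled walks through `(g, c)`; for
`(g, z₀)` itself the walk makes a vertical detour. So `{(x, z₀), (y, z₀)}` is a toll set, and
no single vertex is, since `T(w, w) = {w}`.
-/

namespace SimpleGraph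

variable {V : Type*} {G : SimpleGraph V}

theorem tollInterval_self (w : V) : tollInterval G w w = {w} := by
  ext z
  refine ⟨fun ⟨W, hW, hz⟩ => ?_, fun hz => ⟨Walk.nil, Or.inl ⟨rfl, rfl⟩, by simpa using hz⟩⟩
  rcases hW with ⟨-, hlen⟩ | ⟨hadj, -⟩ | ⟨-, hne, -⟩
  · cases W with
    | nil => simpa using hz
    | cons => simp at hlen
  · exact absurd hadj G.irrefl
  · exact absurd rfl hne

theorem IsTollSet.two_le_ncard {S : Set V} (hS : IsTollSet G S) (hfin : S.Finite) {u v : V}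
    (huv : u ≠ v) : 2 ≤ S.ncard := by
  by_contra! hlt
  have := hfin.to_subtype
  have hsub : S.Subsingleton := Set.ncard_le_one_iff_subsingleton.mp (by omega)
  obtain ⟨a, ha, b, hb, hu⟩ := hS u
  obtain ⟨a', ha', b', hb', hv⟩ := hS v
  rw [hsub hb ha, tollInterval_self] at hu
  rw [hsub hb' ha', tollInterval_self] at hv
  exact huv (hu.trans (hsub ha ha' ▸ hv.symm))

theorem tollNumber_eq_two_of_isTollSet_pair {u v : V} (huv : u ≠ v) (h : IsTollSet G {u, v}) :
    tollNumber G = 2 := by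
  have hmem : 2 ∈ {n | ∃ S : Set V, S.Finite ∧ S.ncard = n ∧ IsTollSet G S} :=
    ⟨{u, v}, Set.toFinite _, Set.ncard_pair huv, h⟩
  refine le_antisymm (Nat.sInf_le hmem) (le_csInf ⟨2, hmem⟩ ?_)
  rintro n ⟨S, hfin, rfl, hS⟩
  exact hS.two_le_ncard hfin huv

theorem isTolledWalk_cons_concat {u a b v : V} (huv : ¬ G.Adj u v) (hne : u ≠ v)
    (hua : G.Adj u a) (P : G.Walk a b) (hbv : G.Adj b v)
    (hu : ∀ z ∈ P.support.tail, ¬ G.Adj u z) (hv : ∀ z ∈ P.support.dropLast, ¬ G.Adj v z) :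
    IsTolledWalk G (Walk.cons hua (P.concat hbv)) := by
  have hlen : (Walk.cons hua (P.concat hbv)).length = P.length + 2 := by simp
  have hget : ∀ j (hj : j ≤ P.length),
      (Walk.cons hua (P.concat hbv)).support.getD (j + 1) u = P.support[j]'(by simp; omega) := by
    intro j hj
    have hj' : j < P.support.length := by simp; omega
    simp [Walk.support_concat, List.getElem?_append_left hj', List.getElem?_eq_getElem hj']
  refine Or.inr (Or.inr ⟨huv, hne, by simp, fun i hi0 hi => ?_, fun i hi0 hi => ?_⟩) <;>
    obtain ⟨j, rfl⟩ : ∃ j, i = j + 1 := ⟨i - 1, by omega⟩ <;>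
    simp only [hlen] at hi ⊢ <;> rw [hget j (by omega)]
  · rcases j with _ | j
    · simpa [Walk.support_getElem_zero] using hua
    · exact iff_of_false (hu _ (List.mem_iff_getElem.mpr ⟨j, by simp; omega, by simp⟩)) (by omega)
  · rcases Nat.lt_or_ge j P.length with h | h
    · exact iff_of_false (hv _ (List.mem_iff_getElem.mpr ⟨j, by simp; omega, by simp⟩)) (by omega)
    · obtain rfl : j = P.length := by omega
      simpa [Walk.support_getElem_length] using hbv.symm

theorem mem_tollInterval_of_mem_support {u a b v : V} (huv : ¬ G.Adj u v) (hne : u ≠ v)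
    (hua : G.Adj u a) (P : G.Walk a b) (hbv : G.Adj b v)
    (hu : ∀ z ∈ P.support.tail, ¬ G.Adj u z) (hv : ∀ z ∈ P.support.dropLast, ¬ G.Adj v z)
    {z : V} (hz : z ∈ P.support) : z ∈ tollInterval G u v :=
  ⟨_, isTolledWalk_cons_concat huv hne hua P hbv hu hv, by simp [Walk.support_concat, hz]⟩

theorem Walk.IsPath.start_notMem_tail_support {u v : V} {p : G.Walk u v} (hp : p.IsPath) :
    u ∉ p.support.tail := by
  have := hp.support_nodup
  rw [← Walk.cons_tail_support, List.nodup_cons] at this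
  exact this.1

theorem Walk.IsPath.end_notMem_dropLast_support {u v : V} {p : G.Walk u v} (hp : p.IsPath) :
    v ∉ p.support.dropLast := by
  have := hp.support_nodup
  rw [← Walk.dropLast_support_concat, List.nodup_append] at this
  exact fun h => this.2.2 v h v (by simp) rfl

theorem Connected.two_le_diam [Finite V] (hG : G.Connected) (hG' : G ≠ ⊤) : 2 ≤ G.diam := by
  have : Nontrivial V := by
    by_contra h
    rw [not_nontrivial_iff_subsingleton] at h
    exact hG' (Subsingleton.elim _ _)
  have h0 := diam_ne_zero_of_ediam_ne_top (connected_iff_ediam_ne_top.mp hG)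
  have h1 : G.diam ≠ 1 := mt diam_eq_one.mp hG'
  omega

theorem Preconnected.exists_isPath_notMem_support (hG : G.Preconnected) {x y g : V}
    (hfar : ∀ w, G.dist x w ≤ G.dist x y) (hgy : g ≠ y) :
    ∃ p : G.Walk x g, p.IsPath ∧ y ∉ p.support := by
  classical
  obtain ⟨p, hp, hlen⟩ := (hG x g).exists_path_of_dist
  refine ⟨p, hp, fun hy => ?_⟩
  have hsplit := congrArg Walk.length (p.take_spec hy)
  rw [Walk.length_append] at hsplit
  have := dist_le (p.takeUntil y hy)
  have := dist_le (p.dropUntil y hy)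
  have := (hG y g).pos_dist_of_ne hgy.symm
  have := hfar g
  omega

theorem Preconnected.exists_isPath_avoiding (hG : G.Preconnected) {x y g : V}
    (hdiam : ∀ a b, G.dist a b ≤ G.dist x y) (hgx : g ≠ x) (hgy : g ≠ y) :
    (∃ L : G.Walk x g, L.IsPath ∧ y ∉ L.support) ∧
      ∃ R : G.Walk g y, R.IsPath ∧ x ∉ R.support := by
  refine ⟨hG.exists_isPath_notMem_support (fun w => hdiam x w) hgy, ?_⟩
  obtain ⟨R, hR, hxR⟩ :=
    hG.exists_isPath_notMem_support (fun w => dist_comm (u := x) ▸ hdiam y w) hgx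
  exact ⟨R.reverse, hR.reverse, by simpa using hxR⟩

theorem Preconnected.exists_walk_mem_support (hG : G.Preconnected) {x y : V}
    (hdiam : ∀ a b, G.dist a b ≤ G.dist x y) (g : V) :
    ∃ Q : G.Walk x y, g ∈ Q.support ∧ x ∉ Q.support.tail ∧ y ∉ Q.support.dropLast := by
  by_cases hg : g = x ∨ g = y
  · obtain ⟨Q, hQ, -⟩ := (hG x y).exists_path_of_dist
    exact ⟨Q, by rcases hg with rfl | rfl <;> simp, hQ.start_notMem_tail_support,
      hQ.end_notMem_dropLast_support⟩
  obtain ⟨hgx, hgy⟩ := not_or.mp hg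
  obtain ⟨⟨L, hL, hyL⟩, R, hR, hxR⟩ := hG.exists_isPath_avoiding hdiam hgx hgy
  refine ⟨L.append R, by simp, ?_, ?_⟩
  · rw [Walk.tail_support_append, List.mem_append, not_or]
    exact ⟨hL.start_notMem_tail_support, fun h => hxR (List.mem_of_mem_tail h)⟩
  · rw [Walk.support_append_eq_support_dropLast_append,
      List.dropLast_append_of_ne_nil (Walk.support_ne_nil _), List.mem_append, not_or]
    exact ⟨fun h => hyL (List.mem_of_mem_dropLast h), hR.end_notMem_dropLast_support⟩

variable {β : Type*}

@[simp]
theorem Walk.support_boxProdLeft {H : SimpleGraph β} {a₁ a₂ : V} (c : β) (p : G.Walk a₁ a₂) :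
    (p.boxProdLeft H c).support = p.support.map (·, c) :=
  Walk.support_map _ _

theorem mem_tollInterval_boxProd_top_of_ne_layer {x y : V} (hxy : x ≠ y) (hnadj : ¬ G.Adj x y)
    {z₀ c : β} (hc : c ≠ z₀) {Q : G.Walk x y} (hxQ : x ∉ Q.support.tail)
    (hyQ : y ∉ Q.support.dropLast) {w : V} (hw : w ∈ Q.support) :
    (w, c) ∈ tollInterval (G □ ⊤) (x, z₀) (y, z₀) := by
  refine mem_tollInterval_of_mem_support (mt boxProd_adj_left.mp hnadj) (by simp [hxy])
    (by simp [hc.symm]) (Q.boxProdLeft ⊤ c) (by simp [hc]) ?_ ?_ (by simp [hw])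
  · simp [← List.map_tail, hc.symm]
    exact fun a ha h => hxQ (h ▸ ha)
  · simp [← List.map_dropLast, hc.symm]
    exact fun a ha h => hyQ (h ▸ ha)

/- The walk runs along `L` and `R` in the layer `z₁` and dips down to `(g, z₀)`; where `g` is
a neighbour of `x` (resp. `y`) it starts (resp. ends) at `(g, z₀)` instead, so that no
interior vertex other than the first (resp. last) sees `(x, z₀)` (resp. `(y, z₀)`). -/
theorem mem_tollInterval_boxProd_top_same_layer {x y g : V} (hxy : x ≠ y) (hnadj : ¬ G.Adj x y)
    {z₀ z₁ : β} (hz : z₁ ≠ z₀) {L : G.Walk x g} (hL : L.IsPath) (hyL : y ∉ L.support)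
    {R : G.Walk g y} (hR : R.IsPath) (hxR : x ∉ R.support) :
    (g, z₀) ∈ tollInterval (G □ ⊤) (x, z₀) (y, z₀) := by
  have huv : ¬ (G □ (⊤ : SimpleGraph β)).Adj (x, z₀) (y, z₀) := mt boxProd_adj_left.mp hnadj
  have hne : (x, z₀) ≠ (y, z₀) := by simp [hxy]
  have up : (G □ (⊤ : SimpleGraph β)).Adj (g, z₀) (g, z₁) := by simp [hz.symm]
  have hgx : g ≠ x := fun h => hxR (h ▸ R.start_mem_support)
  have hgy : g ≠ y := fun h => hyL (h ▸ L.end_mem_support)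
  have hxL := hL.start_notMem_tail_support
  have hyL' : y ∉ L.support.dropLast := fun h => hyL (List.mem_of_mem_dropLast h)
  have hyR := hR.end_notMem_dropLast_support
  by_cases hxg : G.Adj x g <;> by_cases hyg : G.Adj y g
  · exact mem_tollInterval_of_mem_support huv hne (boxProd_adj_left.mpr hxg) Walk.nil
      (boxProd_adj_left.mpr hyg.symm) (by simp) (by simp) (by simp)
  · refine mem_tollInterval_of_mem_support (b := (y, z₁)) huv hne (boxProd_adj_left.mpr hxg)
      (Walk.cons up (R.boxProdLeft ⊤ z₁)) (by simp [hz]) ?_ ?_ (by simp)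
    · simp [hz.symm]; grind
    · simp [List.dropLast_cons_of_ne_nil, ← List.map_dropLast, hz.symm]; grind
  · refine mem_tollInterval_of_mem_support (a := (x, z₁)) huv hne (by simp [hz.symm])
      ((L.boxProdLeft ⊤ z₁).concat up.symm) (boxProd_adj_left.mpr hyg.symm) ?_ ?_ (by simp)
    · simp [Walk.support_concat, ← List.map_tail]; grind
    · simp [Walk.support_concat]; grind
  · refine mem_tollInterval_of_mem_support (a := (x, z₁)) (b := (y, z₁)) huv hne
      (by simp [hz.symm])
      ((L.boxProdLeft ⊤ z₁).append (Walk.cons up.symm (Walk.cons up (R.boxProdLeft ⊤ z₁))))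
      (by simp [hz]) ?_ ?_ (by simp)
    · simp [Walk.tail_support_append, ← List.map_tail]; grind
    · simp [Walk.support_append_eq_support_dropLast_append, List.dropLast_cons_of_ne_nil,
        ← List.map_dropLast]
      grind

theorem isTollSet_boxProd_top_pair [Nontrivial β] (hG : G.Preconnected) {x y : V} (hxy : x ≠ y)
    (hnadj : ¬ G.Adj x y) (hdiam : ∀ a b, G.dist a b ≤ G.dist x y) (z₀ : β) :
    IsTollSet (G □ ⊤) {(x, z₀), (y, z₀)} := by
  rintro ⟨g, c⟩
  by_cases hend : c = z₀ ∧ (g = x ∨ g = y)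
  · obtain ⟨rfl, rfl | rfl⟩ := hend
    · exact ⟨_, .inl rfl, _, .inl rfl, by simp [tollInterval_self]⟩
    · exact ⟨_, .inr rfl, _, .inr rfl, by simp [tollInterval_self]⟩
  refine ⟨_, .inl rfl, _, .inr rfl, ?_⟩
  by_cases hc : c = z₀
  · subst hc
    obtain ⟨hgx, hgy⟩ := not_or.mp fun h => hend ⟨rfl, h⟩
    obtain ⟨⟨L, hL, hyL⟩, R, hR, hxR⟩ := hG.exists_isPath_avoiding hdiam hgx hgy
    obtain ⟨z₁, hz⟩ := exists_ne c
    exact mem_tollInterval_boxProd_top_same_layer hxy hnadj hz hL hyL hR hxR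
  · obtain ⟨Q, hgQ, hxQ, hyQ⟩ := hG.exists_walk_mem_support hdiam g
    exact mem_tollInterval_boxProd_top_of_ne_layer hxy hnadj hc hxQ hyQ hgQ

end SimpleGraph

theorem stmt3 {V : Type*} [Fintype V] (G : SimpleGraph V)
    (hGc : G.Connected) (hG : G ≠ ⊤) (m : ℕ) (hm : 2 ≤ m) :
    tollNumber (G □ (⊤ : SimpleGraph (Fin m))) = 2 := by
  have := hGc.nonempty
  have := Fin.nontrivial_iff_two_le.mpr hm
  obtain ⟨x, y, hxy⟩ := G.exists_dist_eq_diam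
  have h2 := hGc.two_le_diam hG
  have hne : x ≠ y := by rintro rfl; simp at hxy; omega
  have hnadj : ¬ G.Adj x y := fun h => by rw [dist_eq_one_iff_adj.mpr h] at hxy; omega
  have hdiam : ∀ a b, G.dist a b ≤ G.dist x y :=
    fun a b => hxy ▸ dist_le_diam (connected_iff_ediam_ne_top.mp hGc)
  exact tollNumber_eq_two_of_isTollSet_pair (by simp [hne])
    (isTollSet_boxProd_top_pair hGc.preconnected hne hnadj hdiam ⟨0, by omega⟩)
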